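/- arXiv:2010.11821 — 7 statements merged into one kernel-verified Lean document; each statement's English description precedes it below -/
import Mathlib

section
/- Let X and Y be finite nonempty subsets of ℝ^d, let c_i, c_j ∈ ℝ^d, let R ≥ 0 and δ > 0. Suppose ‖x − c_i‖² ≤ R for all x ∈ X, ‖y − c_j‖² ≤ R for all y ∈ Y, and ‖c_i − c_j‖² ≥ δ·R. Then the average pairwise squared distance satisfies (1/(|X|·|Y|)) · Σ_{x∈X} Σ_{y∈Y} ‖x − y‖² ≥ (δ/3 − 2)·R. -/
open Finset

lemma sq_norm_add₃_le {d : ℕ} (u v w : EuclideanSpace ℝ (Fin d)) :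
    ‖u + v + w‖ ^ 2 ≤ 3 * (‖u‖ ^ 2 + ‖v‖ ^ 2 + ‖w‖ ^ 2) := by
  have h : ‖u + v + w‖ ≤ ‖u‖ + ‖v‖ + ‖w‖ :=
    (norm_add_le _ _).trans (by linarith [norm_add_le u v])
  nlinarith [norm_nonneg (u + v + w), norm_nonneg u, norm_nonneg v, norm_nonneg w,
    sq_nonneg (‖u‖ - ‖v‖), sq_nonneg (‖u‖ - ‖w‖), sq_nonneg (‖v‖ - ‖w‖)]

/-- Inter-cluster lower bound on the average pairwise squared
distance under squared `δ`-separation of the two centers. -/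
theorem avg_sq_dist_inter_cluster_lower_bound {d : ℕ}
    (X Y : Finset (EuclideanSpace ℝ (Fin d)))
    (hX : X.Nonempty) (hY : Y.Nonempty)
    (ci cj : EuclideanSpace ℝ (Fin d)) (R δ : ℝ) (hR : 0 ≤ R) (hδ : 0 < δ)
    (hXc : ∀ x ∈ X, ‖x - ci‖ ^ 2 ≤ R)
    (hYc : ∀ y ∈ Y, ‖y - cj‖ ^ 2 ≤ R)
    (hsep : δ * R ≤ ‖ci - cj‖ ^ 2) :
    (δ / 3 - 2) * R ≤
      (1 / ((X.card : ℝ) * (Y.card : ℝ))) * ∑ x ∈ X, ∑ y ∈ Y, ‖x - y‖ ^ 2 := by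
  have key : ∀ x ∈ X, ∀ y ∈ Y, (δ / 3 - 2) * R ≤ ‖x - y‖ ^ 2 := by
    intro x hx y hy
    have h3 := sq_norm_add₃_le (ci - x) (x - y) (y - cj)
    have he : ci - x + (x - y) + (y - cj) = ci - cj := by abel
    rw [he] at h3
    have h1 : ‖ci - x‖ ^ 2 ≤ R := by rw [norm_sub_rev]; exact hXc x hx
    have h2 : ‖y - cj‖ ^ 2 ≤ R := hYc y hy
    linarith
  have hn : (0:ℝ) < (X.card : ℝ) := by exact_mod_cast hX.card_pos
  have hm : (0:ℝ) < (Y.card : ℝ) := by exact_mod_cast hY.card_pos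
  have hsum : (X.card : ℝ) * (Y.card : ℝ) * ((δ / 3 - 2) * R) ≤
      ∑ x ∈ X, ∑ y ∈ Y, ‖x - y‖ ^ 2 := by
    calc (X.card : ℝ) * (Y.card : ℝ) * ((δ / 3 - 2) * R)
        = ∑ x ∈ X, ∑ y ∈ Y, (δ / 3 - 2) * R := by
          rw [Finset.sum_const, Finset.sum_const]; push_cast; ring
      _ ≤ _ := Finset.sum_le_sum fun x hx =>
          Finset.sum_le_sum fun y hy => key x hx y hy
  rw [div_mul_eq_mul_div, one_mul, le_div_iff₀ (by positivity)]
  linarith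
end

section
/- Let (M, dist) be a metric space, let X, X', Y be finite nonempty subsets of M, let c_i, c_j ∈ M, let R ≥ 0 and δ > 0. Suppose dist(x, c_i) ≤ R for all x ∈ X ∪ X', dist(y, c_j) ≤ R for all y ∈ Y, and dist(c_i, c_j) ≥ δ·R. Then (1/(|X|·|X'|)) · Σ_{x∈X} Σ_{x'∈X'} dist(x, x') ≤ 2·R, and (1/(|X|·|Y|)) · Σ_{x∈X} Σ_{y∈Y} dist(x, y) ≥ (δ − 2)·R. In particular, if δ ≥ 6 and R > 0, every such pair X, X' of subsets of the same cluster has strictly smaller average linkage than every such pair X, Y of subsets of different clusters. -/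
open Finset
open scoped Classical

/-- Metric-space separation bounds (the `γ = 6` case): under
`δ`-separation, average-linkage distances within a cluster are at most `2R`,
average-linkage distances across clusters are at least `(δ - 2) R`, and when
`δ ≥ 6` and `R > 0` the former is strictly smaller than the latter. -/
theorem avg_dist_separation_bounds_metric {M : Type*} [MetricSpace M]
    (X X' Y : Finset M)
    (hX : X.Nonempty) (hX' : X'.Nonempty) (hY : Y.Nonempty)
    (ci cj : M) (R δ : ℝ) (hR : 0 ≤ R) (hδ : 0 < δ)
    (hXc : ∀ x ∈ X ∪ X', dist x ci ≤ R)
    (hYc : ∀ y ∈ Y, dist y cj ≤ R)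
    (hsep : δ * R ≤ dist ci cj) :
    (1 / ((X.card : ℝ) * (X'.card : ℝ))) * (∑ x ∈ X, ∑ x' ∈ X', dist x x') ≤
        2 * R ∧
      (δ - 2) * R ≤
        (1 / ((X.card : ℝ) * (Y.card : ℝ))) * (∑ x ∈ X, ∑ y ∈ Y, dist x y) ∧
      (6 ≤ δ → 0 < R →
        (1 / ((X.card : ℝ) * (X'.card : ℝ))) * (∑ x ∈ X, ∑ x' ∈ X', dist x x') <
          (1 / ((X.card : ℝ) * (Y.card : ℝ))) * (∑ x ∈ X, ∑ y ∈ Y, dist x y)) := by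
  have hXpos : (0 : ℝ) < X.card := by exact_mod_cast Finset.card_pos.mpr hX
  have hX'pos : (0 : ℝ) < X'.card := by exact_mod_cast Finset.card_pos.mpr hX'
  have hYpos : (0 : ℝ) < Y.card := by exact_mod_cast Finset.card_pos.mpr hY
  -- pointwise upper bound within cluster
  have hup : ∀ x ∈ X, ∀ x' ∈ X', dist x x' ≤ 2 * R := by
    intro x hx x' hx'
    have h1 := hXc x (Finset.mem_union_left _ hx)
    have h2 := hXc x' (Finset.mem_union_right _ hx')
    calc dist x x' ≤ dist x ci + dist x' ci := dist_triangle_right _ _ _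
    _ ≤ 2 * R := by linarith
  -- pointwise lower bound across clusters
  have hlow : ∀ x ∈ X, ∀ y ∈ Y, (δ - 2) * R ≤ dist x y := by
    intro x hx y hy
    have h1 := hXc x (Finset.mem_union_left _ hx)
    have h2 := hYc y hy
    have h3 : dist ci cj ≤ dist ci x + dist x y + dist y cj := dist_triangle4 _ _ _ _
    rw [dist_comm ci x] at h3
    linarith
  have sum_up : ∑ x ∈ X, ∑ x' ∈ X', dist x x' ≤ (X.card : ℝ) * X'.card * (2 * R) := by
    calc ∑ x ∈ X, ∑ x' ∈ X', dist x x'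
        ≤ ∑ x ∈ X, ∑ x' ∈ X', 2 * R := by
          apply Finset.sum_le_sum; intro x hx
          exact Finset.sum_le_sum fun x' hx' => hup x hx x' hx'
    _ = (X.card : ℝ) * X'.card * (2 * R) := by
          simp [Finset.sum_const, mul_assoc]
  have sum_low : (X.card : ℝ) * Y.card * ((δ - 2) * R) ≤ ∑ x ∈ X, ∑ y ∈ Y, dist x y := by
    calc (X.card : ℝ) * Y.card * ((δ - 2) * R)
        = ∑ x ∈ X, ∑ y ∈ Y, (δ - 2) * R := by simp [Finset.sum_const, mul_assoc]
    _ ≤ ∑ x ∈ X, ∑ y ∈ Y, dist x y := by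
          apply Finset.sum_le_sum; intro x hx
          exact Finset.sum_le_sum fun y hy => hlow x hx y hy
  have hprod : (0 : ℝ) < (X.card : ℝ) * X'.card := mul_pos hXpos hX'pos
  have hprod2 : (0 : ℝ) < (X.card : ℝ) * Y.card := mul_pos hXpos hYpos
  have A : (1 / ((X.card : ℝ) * X'.card)) * (∑ x ∈ X, ∑ x' ∈ X', dist x x') ≤ 2 * R := by
    rw [one_div, inv_mul_le_iff₀ hprod]
    linarith [sum_up]
  have B : (δ - 2) * R ≤ (1 / ((X.card : ℝ) * Y.card)) * (∑ x ∈ X, ∑ y ∈ Y, dist x y) := by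
    rw [one_div, le_inv_mul_iff₀ hprod2]
    linarith [sum_low]
  refine ⟨A, B, fun h6 hRpos => ?_⟩
  have : 2 * R < (δ - 2) * R := by nlinarith
  linarith
end

section
/- Let X ⊆ ℝ^d be finite and satisfy squared δ-separation with δ ≥ 30 with respect to a partition S* = {C*_1, …, C*_k} with centers c*_1, …, c*_k and radius R > 0. Let S be a partition of X that refines S* (every cluster of S is contained in some cluster of S*), and let d be the average squared-distance linkage. Then: (1) for any C, C' ∈ S contained in the same cluster of S*, d(C, C') ≤ 4·R; (2) for any C, C' ∈ S contained in different clusters of S*, d(C, C') ≥ 8·R; and consequently (3) for any C ∈ S with C ⊆ C*_i and C ≠ C*_i, every minimizer of d(C, ·) over S \ {C} is a subset of C*_i. -/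
open Finset
open scoped Classical

/-- The average squared-distance linkage between two finite sets of points. -/
noncomputable def avgLinkage {d : ℕ}
    (A B : Finset (EuclideanSpace ℝ (Fin d))) : ℝ :=
  (∑ a ∈ A, ∑ b ∈ B, ‖a - b‖ ^ 2) / ((A.card : ℝ) * (B.card : ℝ))

lemma aux_lower (t w s R : ℝ) (ht : 0 ≤ t) (hs : 0 ≤ s) (hw : 0 ≤ w)
    (hwst : w - s ≤ t) (hs2 : s ^ 2 ≤ 4 * R) (hw2 : 30 * R ≤ w ^ 2)
    (hR : 0 < R) : 8 * R ≤ t ^ 2 := by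
  have hws : 0 ≤ w - s := by nlinarith
  have h1 : (w - s) ^ 2 ≤ t ^ 2 := by nlinarith
  nlinarith [sq_nonneg (2 * w - 5 * s)]

/-- Purity lemma for squared `δ`-separated data with `δ ≥ 30`:
for any partition `S` refining the target partition `Sstar`,
(1) clusters of `S` inside the same target cluster have average linkage `≤ 4R`,
(2) clusters of `S` inside different target clusters have average linkage `≥ 8R`,
and (3) every minimizer of the average linkage to a strict sub-cluster of a
target cluster stays inside that target cluster. -/
theorem scc_purity_lemma {d : ℕ}
    (X : Finset (EuclideanSpace ℝ (Fin d)))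
    (Sstar S : Finset (Finset (EuclideanSpace ℝ (Fin d))))
    (cen : Finset (EuclideanSpace ℝ (Fin d)) → EuclideanSpace ℝ (Fin d))
    (δ R : ℝ) (hδ : 30 ≤ δ) (hR : 0 < R)
    (hne : ∀ A ∈ Sstar, A.Nonempty)
    (hdisj : ∀ A ∈ Sstar, ∀ B ∈ Sstar, A ≠ B → Disjoint A B)
    (hcover : Sstar.sup id = X)
    (hRle : ∀ A ∈ Sstar, ∀ x ∈ A, ‖x - cen A‖ ^ 2 ≤ R)
    (hRmax : ∃ A ∈ Sstar, ∃ x ∈ A, ‖x - cen A‖ ^ 2 = R)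
    (hsep : ∀ A ∈ Sstar, ∀ B ∈ Sstar, A ≠ B → δ * R ≤ ‖cen A - cen B‖ ^ 2)
    (hSne : ∀ A ∈ S, A.Nonempty)
    (hSdisj : ∀ A ∈ S, ∀ B ∈ S, A ≠ B → Disjoint A B)
    (hScover : S.sup id = X)
    (hrefine : ∀ A ∈ S, ∃ T ∈ Sstar, A ⊆ T) :
    (∀ A ∈ S, ∀ B ∈ S, ∀ T ∈ Sstar, A ⊆ T → B ⊆ T → avgLinkage A B ≤ 4 * R) ∧
    (∀ A ∈ S, ∀ B ∈ S, ∀ T ∈ Sstar, ∀ T' ∈ Sstar, T ≠ T' → A ⊆ T → B ⊆ T' →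
      8 * R ≤ avgLinkage A B) ∧
    (∀ A ∈ S, ∀ T ∈ Sstar, A ⊆ T → A ≠ T →
      ∀ B ∈ S, B ≠ A → (∀ B' ∈ S, B' ≠ A → avgLinkage A B ≤ avgLinkage A B') →
        B ⊆ T) := by
  have cardpos : ∀ A ∈ S, (0:ℝ) < (A.card : ℝ) := fun A hA => by
    exact_mod_cast Finset.card_pos.2 (hSne A hA)
  -- Part 1
  have part1 : ∀ A ∈ S, ∀ B ∈ S, ∀ T ∈ Sstar, A ⊆ T → B ⊆ T →
      avgLinkage A B ≤ 4 * R := by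
    intro A hA B hB T hT hAT hBT
    have hpt : ∀ a ∈ A, ∀ b ∈ B, ‖a - b‖ ^ 2 ≤ 4 * R := by
      intro a ha b hb
      have h1 := hRle T hT a (hAT ha)
      have h2 := hRle T hT b (hBT hb)
      have htri : ‖a - b‖ ≤ ‖a - cen T‖ + ‖b - cen T‖ := by
        have := dist_triangle a (cen T) b
        simpa [dist_eq_norm, norm_sub_rev (cen T) b] using this
      nlinarith [norm_nonneg (a - b), norm_nonneg (a - cen T), norm_nonneg (b - cen T),
        mul_le_mul htri htri (norm_nonneg (a - b)) (by positivity),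
        sq_nonneg (‖a - cen T‖ - ‖b - cen T‖)]
    have hsum : (∑ a ∈ A, ∑ b ∈ B, ‖a - b‖ ^ 2)
        ≤ (A.card : ℝ) * (B.card : ℝ) * (4 * R) := by
      calc (∑ a ∈ A, ∑ b ∈ B, ‖a - b‖ ^ 2)
          ≤ ∑ a ∈ A, ∑ b ∈ B, (4 * R) := by
            refine Finset.sum_le_sum fun a ha => Finset.sum_le_sum fun b hb => hpt a ha b hb
        _ = (A.card : ℝ) * (B.card : ℝ) * (4 * R) := by
            simp [Finset.sum_const, mul_assoc]
    rw [avgLinkage, div_le_iff₀ (by positivity : (0:ℝ) < (A.card : ℝ) * (B.card : ℝ))]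
    · linarith [hsum]
  -- Part 2
  have part2 : ∀ A ∈ S, ∀ B ∈ S, ∀ T ∈ Sstar, ∀ T' ∈ Sstar, T ≠ T' → A ⊆ T → B ⊆ T' →
      8 * R ≤ avgLinkage A B := by
    intro A hA B hB T hT T' hT' hTT' hAT hBT'
    have hpt : ∀ a ∈ A, ∀ b ∈ B, 8 * R ≤ ‖a - b‖ ^ 2 := by
      intro a ha b hb
      have h1 := hRle T hT a (hAT ha)
      have h2 := hRle T' hT' b (hBT' hb)
      have hcc : 30 * R ≤ ‖cen T - cen T'‖ ^ 2 := by
        have := hsep T hT T' hT' hTT'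
        nlinarith
      have htri : ‖cen T - cen T'‖ - (‖a - cen T‖ + ‖b - cen T'‖) ≤ ‖a - b‖ := by
        have h4 := dist_triangle4 (cen T) a b (cen T')
        simp only [dist_eq_norm] at h4
        have e1 : ‖cen T - a‖ = ‖a - cen T‖ := norm_sub_rev _ _
        have e2 : ‖b - cen T'‖ = ‖b - cen T'‖ := rfl
        linarith [h4, e1.le, e1.ge]
      have hs2 : (‖a - cen T‖ + ‖b - cen T'‖) ^ 2 ≤ 4 * R := by
        nlinarith [norm_nonneg (a - cen T), norm_nonneg (b - cen T')]
      exact aux_lower _ _ _ R (norm_nonneg _)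
        (by positivity) (norm_nonneg _) htri hs2 hcc hR
    have hsum : (A.card : ℝ) * (B.card : ℝ) * (8 * R)
        ≤ (∑ a ∈ A, ∑ b ∈ B, ‖a - b‖ ^ 2) := by
      calc (A.card : ℝ) * (B.card : ℝ) * (8 * R)
          = ∑ a ∈ A, ∑ b ∈ B, (8 * R) := by simp [Finset.sum_const, mul_assoc]
        _ ≤ ∑ a ∈ A, ∑ b ∈ B, ‖a - b‖ ^ 2 := by
            refine Finset.sum_le_sum fun a ha => Finset.sum_le_sum fun b hb => hpt a ha b hb
    rw [avgLinkage, le_div_iff₀ (by positivity : (0:ℝ) < (A.card : ℝ) * (B.card : ℝ))]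
    linarith [hsum]
  refine ⟨part1, part2, ?_⟩
  -- Part 3
  intro A hA T hT hAT hAneT B hB hBA hmin
  -- find a point of T not in A
  have hssub : A ⊂ T := hAT.ssubset_of_ne hAneT
  obtain ⟨x, hxT, hxA⟩ := Finset.exists_of_ssubset hssub
  have hxX : x ∈ X := by
    rw [← hcover]
    exact Finset.mem_sup.2 ⟨T, hT, hxT⟩
  obtain ⟨B', hB', hxB'⟩ := Finset.mem_sup.1 (hScover ▸ hxX : x ∈ S.sup id)
  have hB'A : B' ≠ A := fun h => hxA (h ▸ hxB')
  obtain ⟨T'', hT'', hB'T''⟩ := hrefine B' hB'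
  have hT''T : T'' = T := by
    by_contra hne'
    exact (Finset.disjoint_left.1 (hdisj T'' hT'' T hT hne')) (hB'T'' hxB') hxT
  have hmin' : avgLinkage A B ≤ 4 * R := by
    calc avgLinkage A B ≤ avgLinkage A B' := hmin B' hB' hB'A
      _ ≤ 4 * R := part1 A hA B' hB' T hT hAT (hT''T ▸ hB'T'')
  obtain ⟨T', hT', hBT'⟩ := hrefine B hB
  by_cases hTT' : T' = T
  · exact hTT' ▸ hBT'
  · exfalso
    have := part2 A hA B hB T hT T' hT' (Ne.symm hTT') hAT hBT'
    linarith
end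

section
/- (Theorem 1) Let X ⊆ ℝ^d be finite and satisfy squared δ-separation with δ ≥ 30 with respect to a target partition S* = {C*_1, …, C*_k} with radius R > 0. Run the SCC algorithm on X with d the average squared-distance linkage and geometrically increasing thresholds τ_i = 2^i · τ_0, where 0 < τ_0 ≤ min_{x ≠ x' ∈ X} ‖x − x'‖² and the number L of thresholds satisfies 2^L · τ_0 ≥ 8·R. Then the target partition S* equals one of the partitions produced by the rounds of SCC. -/
/-!
Points of one target cluster are within squared distance `4R` of each other, points of
different clusters at squared distance at least `9R`, and average linkage inherits both bounds.
So while the threshold stays below `9R` no edge of SCC joins two target clusters, and every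
partition produced refines `S*`. The first threshold `τ ≥ 4R` is still below `2 · 4R < 9R`; at
it, a partition strictly finer than `S*` has two clusters inside one target cluster, hence
linkage at most `τ`, so every round strictly merges clusters until it reaches `S*`, which is a
fixed point.
-/

open Finset
open scoped Classical

variable {α : Type*}

/-- One edge of the sub-cluster component graph (Definition 3): `A` and `B` are
distinct clusters of the partition `S`, their linkage is at most `τ`, and one of
them is the nearest neighbor (argmin of the linkage over `S` minus itself) of
the other. -/
def sccEdge (d : Finset α → Finset α → ℝ) (τ : ℝ)
    (S : Finset (Finset α)) (A B : Finset α) : Prop :=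
  A ∈ S ∧ B ∈ S ∧ A ≠ B ∧ d A B ≤ τ ∧
    ((∀ C ∈ S, C ≠ A → d A B ≤ d A C) ∨ (∀ C ∈ S, C ≠ B → d B A ≤ d B C))

/-- The union of all clusters of `S` lying in the same sub-cluster component
as `A` at threshold `τ` (i.e. joined to `A` by a path of `sccEdge` steps). -/
noncomputable def sccComponent (d : Finset α → Finset α → ℝ) (τ : ℝ)
    (S : Finset (Finset α)) (A : Finset α) : Finset α :=
  (S.filter fun B => Relation.ReflTransGen (sccEdge d τ S) A B).sup id

/-- One round of SCC at threshold `τ`: merge the clusters of each sub-cluster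
component. -/
noncomputable def sccRound (d : Finset α → Finset α → ℝ) (τ : ℝ)
    (S : Finset (Finset α)) : Finset (Finset α) :=
  S.image (sccComponent d τ S)

/-- The partitions produced by `n` successive rounds of SCC at threshold `τ`,
starting from `S`. -/
noncomputable def sccAtThreshold (d : Finset α → Finset α → ℝ) (τ : ℝ)
    (n : ℕ) (S : Finset (Finset α)) : List (Finset (Finset α)) :=
  (List.range n).map fun k => (sccRound d τ)^[k + 1] S

/-- The partition of `X` into singletons, the starting partition of SCC. -/
noncomputable def singletonPartition (X : Finset α) : Finset (Finset α) :=
  X.image fun x => {x}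

/-- The list of partitions produced by the rounds of the Sub-Cluster Component
algorithm on `X` with linkage `d` and the increasing thresholds `τs`: starting
from singletons, for each threshold the round operation is iterated until it
stabilizes (running `X.card` rounds per threshold guarantees stabilization,
after which the threshold advances). -/
noncomputable def sccPartitions (X : Finset α) (d : Finset α → Finset α → ℝ)
    (τs : List ℝ) : List (Finset (Finset α)) :=
  τs.foldl
    (fun acc τ =>
      acc ++ sccAtThreshold d τ X.card (acc.getLastD (singletonPartition X)))
    [singletonPartition X]

structure IsPartition (X : Finset α) (S : Finset (Finset α)) : Prop where
  nonempty : ∀ A ∈ S, A.Nonempty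
  disjoint : ∀ A ∈ S, ∀ B ∈ S, A ≠ B → Disjoint A B
  mem_iff : ∀ x, x ∈ X ↔ ∃ A ∈ S, x ∈ A

def Refines (S T : Finset (Finset α)) : Prop :=
  ∀ A ∈ S, ∃ C ∈ T, A ⊆ C

namespace IsPartition

variable {X : Finset α} {S T : Finset (Finset α)}

lemma subset (hS : IsPartition X S) {A : Finset α} (hA : A ∈ S) : A ⊆ X :=
  fun x hx => (hS.mem_iff x).mpr ⟨A, hA, hx⟩

lemma exists_mem (hS : IsPartition X S) {x : α} (hx : x ∈ X) : ∃ A ∈ S, x ∈ A :=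
  (hS.mem_iff x).mp hx

lemma eq_of_mem_of_mem (hS : IsPartition X S) {A B : Finset α} (hA : A ∈ S) (hB : B ∈ S)
    {x : α} (hxA : x ∈ A) (hxB : x ∈ B) : A = B := by
  by_contra hAB
  exact Finset.disjoint_left.mp (hS.disjoint A hA B hB hAB) hxA hxB

lemma card_le (hS : IsPartition X S) : S.card ≤ X.card := by
  calc S.card = ∑ _A ∈ S, 1 := by simp
    _ ≤ ∑ A ∈ S, A.card := Finset.sum_le_sum fun A hA => (hS.nonempty A hA).card_pos
    _ = (S.biUnion id).card := (Finset.card_biUnion fun A hA B hB => hS.disjoint A hA B hB).symm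
    _ = X.card := by
      congr 1
      ext x
      simp [hS.mem_iff]

lemma exists_ne_subset_of_refines (hS : IsPartition X S) (hT : IsPartition X T)
    (hST : Refines S T) (hne : S ≠ T) :
    ∃ A ∈ S, ∃ B ∈ S, A ≠ B ∧ ∃ C ∈ T, A ⊆ C ∧ B ⊆ C := by
  by_contra! hsplit
  have hcover : ∀ C ∈ T, ∀ x ∈ C, ∃ B ∈ S, x ∈ B ∧ B ⊆ C := by
    intro C hC x hxC
    obtain ⟨B, hB, hxB⟩ := hS.exists_mem (hT.subset hC hxC)
    obtain ⟨C', hC', hBC'⟩ := hST B hB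
    exact ⟨B, hB, hxB, hT.eq_of_mem_of_mem hC' hC (hBC' hxB) hxC ▸ hBC'⟩
  have heq : ∀ A ∈ S, ∀ C ∈ T, A ⊆ C → A = C := by
    refine fun A hA C hC hAC => Finset.Subset.antisymm hAC fun x hxC => ?_
    obtain ⟨B, hB, hxB, hBC⟩ := hcover C hC x hxC
    by_cases hAB : A = B
    · exact hAB ▸ hxB
    · exact absurd hBC (hsplit A hA B hB hAB C hC hAC)
  refine hne (Finset.Subset.antisymm (fun A hA => ?_) fun C hC => ?_)
  · obtain ⟨C, hC, hAC⟩ := hST A hA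
    exact heq A hA C hC hAC ▸ hC
  · obtain ⟨x, hxC⟩ := hT.nonempty C hC
    obtain ⟨B, hB, -, hBC⟩ := hcover C hC x hxC
    exact heq B hB C hC hBC ▸ hB

end IsPartition

section Singletons

variable {X : Finset α} {T : Finset (Finset α)}

lemma isPartition_singletonPartition : IsPartition X (singletonPartition X) where
  nonempty := by simp [singletonPartition]
  disjoint := by
    simp only [singletonPartition, Finset.mem_image]
    rintro _ ⟨x, -, rfl⟩ _ ⟨y, -, rfl⟩ hxy
    exact Finset.disjoint_singleton.mpr fun h => hxy (h ▸ rfl)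
  mem_iff := by simp [singletonPartition]

lemma singletonPartition_refines (hT : IsPartition X T) :
    Refines (singletonPartition X) T := by
  simp only [Refines, singletonPartition, Finset.mem_image]
  rintro _ ⟨x, hx, rfl⟩
  obtain ⟨C, hC, hxC⟩ := hT.exists_mem hx
  exact ⟨C, hC, Finset.singleton_subset_iff.mpr hxC⟩

end Singletons

section Round

variable {X : Finset α} {d : Finset α → Finset α → ℝ} {τ : ℝ} {S T : Finset (Finset α)}

lemma sccEdge.symm (hd : ∀ A B, d A B = d B A) {A B : Finset α} (h : sccEdge d τ S A B) :
    sccEdge d τ S B A := by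
  obtain ⟨hA, hB, hAB, hle, hmin⟩ := h
  exact ⟨hB, hA, hAB.symm, hd A B ▸ hle, hmin.symm⟩

lemma mem_sccComponent {A : Finset α} {x : α} :
    x ∈ sccComponent d τ S A ↔ ∃ B ∈ S, Relation.ReflTransGen (sccEdge d τ S) A B ∧ x ∈ B := by
  simp [sccComponent, Finset.mem_sup, and_assoc]

lemma subset_sccComponent {A : Finset α} (hA : A ∈ S) : A ⊆ sccComponent d τ S A :=
  fun _ hx => mem_sccComponent.mpr ⟨A, hA, .refl, hx⟩

lemma sccComponent_eq_of_reflTransGen (hd : ∀ A B, d A B = d B A) {A B : Finset α}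
    (h : Relation.ReflTransGen (sccEdge d τ S) A B) :
    sccComponent d τ S A = sccComponent d τ S B := by
  have : Std.Symm (sccEdge d τ S) := ⟨fun _ _ => sccEdge.symm hd⟩
  ext x
  simp only [mem_sccComponent]
  exact ⟨fun ⟨C, hC, hAC, hx⟩ => ⟨C, hC, (Std.Symm.symm _ _ h).trans hAC, hx⟩,
    fun ⟨C, hC, hBC, hx⟩ => ⟨C, hC, h.trans hBC, hx⟩⟩

lemma isPartition_sccRound (hd : ∀ A B, d A B = d B A) (hS : IsPartition X S) :
    IsPartition X (sccRound d τ S) where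
  nonempty := by
    simp only [sccRound, Finset.mem_image]
    rintro _ ⟨A, hA, rfl⟩
    exact (hS.nonempty A hA).mono (subset_sccComponent hA)
  disjoint := by
    simp only [sccRound, Finset.mem_image]
    rintro _ ⟨A, -, rfl⟩ _ ⟨B, -, rfl⟩ hAB
    refine Finset.disjoint_left.mpr fun x hxA hxB => hAB ?_
    obtain ⟨A', hA', hAA', hxA'⟩ := mem_sccComponent.mp hxA
    obtain ⟨B', hB', hBB', hxB'⟩ := mem_sccComponent.mp hxB
    rw [sccComponent_eq_of_reflTransGen hd hAA', sccComponent_eq_of_reflTransGen hd hBB',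
      hS.eq_of_mem_of_mem hA' hB' hxA' hxB']
  mem_iff x := by
    simp only [sccRound, Finset.mem_image, exists_exists_and_eq_and]
    refine ⟨fun hx => ?_, fun ⟨A, hA, hx⟩ => ?_⟩
    · obtain ⟨A, hA, hxA⟩ := hS.exists_mem hx
      exact ⟨A, hA, subset_sccComponent hA hxA⟩
    · obtain ⟨B, hB, -, hxB⟩ := mem_sccComponent.mp hx
      exact hS.subset hB hxB

lemma refines_sccRound (hS : IsPartition X S) (hT : IsPartition X T) (hST : Refines S T)
    (hedge : ∀ A B, sccEdge d τ S A B → ∃ C ∈ T, A ⊆ C ∧ B ⊆ C) :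
    Refines (sccRound d τ S) T := by
  simp only [Refines, sccRound, Finset.mem_image]
  rintro _ ⟨A, hA, rfl⟩
  obtain ⟨C, hC, hAC⟩ := hST A hA
  have hpath : ∀ B, Relation.ReflTransGen (sccEdge d τ S) A B → B ⊆ C := by
    intro B hAB
    induction hAB with
    | refl => exact hAC
    | tail _ e hB =>
      obtain ⟨C', hC', hBC', hB'C'⟩ := hedge _ _ e
      obtain ⟨y, hy⟩ := hS.nonempty _ e.1
      exact hT.eq_of_mem_of_mem hC' hC (hBC' hy) (hB hy) ▸ hB'C'
  refine ⟨C, hC, fun x hx => ?_⟩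
  obtain ⟨B, -, hAB, hxB⟩ := mem_sccComponent.mp hx
  exact hpath B hAB hxB

lemma sccRound_eq_self (hno : ∀ A B, ¬ sccEdge d τ S A B) : sccRound d τ S = S := by
  have hcomp : ∀ A ∈ S, sccComponent d τ S A = A := by
    refine fun A hA => Finset.Subset.antisymm (fun x hx => ?_) (subset_sccComponent hA)
    obtain ⟨B, -, hAB, hxB⟩ := mem_sccComponent.mp hx
    rcases hAB.cases_head with rfl | ⟨C, hAC, -⟩
    · exact hxB
    · exact absurd hAC (hno A C)
  rw [sccRound, Finset.image_congr hcomp, Finset.image_id']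

/-- Two clusters within linkage `τ` guarantee an edge: `A` and its nearest neighbour. -/
lemma card_sccRound_lt (hd : ∀ A B, d A B = d B A) {A B : Finset α} (hA : A ∈ S) (hB : B ∈ S)
    (hAB : A ≠ B) (hτ : d A B ≤ τ) : (sccRound d τ S).card < S.card := by
  obtain ⟨N, hN, hmin⟩ :=
    (S.erase A).exists_min_image (d A) ⟨B, Finset.mem_erase.mpr ⟨hAB.symm, hB⟩⟩
  obtain ⟨hNA, hNS⟩ := Finset.mem_erase.mp hN
  have hedge : sccEdge d τ S A N :=
    ⟨hA, hNS, hNA.symm, (hmin B (Finset.mem_erase.mpr ⟨hAB.symm, hB⟩)).trans hτ,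
      Or.inl fun C hC hCA => hmin C (Finset.mem_erase.mpr ⟨hCA, hC⟩)⟩
  refine Finset.card_image_le.lt_of_ne fun h => hNA ?_
  exact Finset.card_image_iff.mp h hNS hA
    (sccComponent_eq_of_reflTransGen hd (.single hedge)).symm

end Round

lemma iterate_eq_of_measure_lt {β : Type*} {f : β → β} {p : β → Prop} {μ : β → ℕ} {t : β}
    (hp : ∀ b, p b → p (f b)) (ht : f t = t) (hμ : ∀ b, p b → b ≠ t → μ (f b) < μ b) :
    ∀ n b, p b → μ b ≤ n → f^[n] b = t := by
  intro n
  induction n with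
  | zero =>
    intro b hb h0
    by_contra hbt
    exact absurd (hμ b hb hbt) (by omega)
  | succ n ih =>
    intro b hb hn
    by_cases hbt : b = t
    · exact hbt ▸ Function.iterate_fixed ht (n + 1)
    · exact ih (f b) (hp b hb) (by have := hμ b hb hbt; omega)

section Run

variable {X : Finset α} {d : Finset α → Finset α → ℝ}

lemma getLastD_append_sccAtThreshold (τ : ℝ) (n : ℕ) (acc : List (Finset (Finset α)))
    (s : Finset (Finset α)) :
    (acc ++ sccAtThreshold d τ n (acc.getLastD s)).getLastD s =
      (sccRound d τ)^[n] (acc.getLastD s) := by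
  cases n with
  | zero => simp [sccAtThreshold]
  | succ n =>
    rw [sccAtThreshold, List.range_succ, List.map_append, ← List.append_assoc]
    exact List.getLastD_concat

lemma getLastD_sccPartitions (τs : List ℝ) :
    (sccPartitions X d τs).getLastD (singletonPartition X) =
      τs.foldl (fun S τ => (sccRound d τ)^[X.card] S) (singletonPartition X) :=
  (List.foldl_hom (fun acc => acc.getLastD (singletonPartition X))
    fun acc τ => (getLastD_append_sccAtThreshold τ X.card acc _).symm).symm

lemma sccPartitions_prefix_append (τs τs' : List ℝ) :
    sccPartitions X d τs <+: sccPartitions X d (τs ++ τs') := by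
  rw [sccPartitions, sccPartitions, List.foldl_append]
  generalize τs.foldl _ _ = acc
  induction τs' generalizing acc with
  | nil => exact List.prefix_refl acc
  | cons τ τs' ih => exact (List.prefix_append _ _).trans (ih _)

lemma getLastD_sccPartitions_mem (τs : List ℝ) :
    (sccPartitions X d τs).getLastD (singletonPartition X) ∈ sccPartitions X d τs := by
  obtain ⟨l, hl⟩ := sccPartitions_prefix_append (X := X) (d := d) [] τs
  rw [List.nil_append] at hl
  rw [← hl, sccPartitions, List.foldl_nil, List.singleton_append, List.getLastD_cons]
  exact List.getLastD_mem_cons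

end Run

lemma singletonPartition_mem_sccPartitions {X : Finset α} {d : Finset α → Finset α → ℝ}
    (τs : List ℝ) : singletonPartition X ∈ sccPartitions X d τs :=
  (sccPartitions_prefix_append [] τs).subset List.mem_cons_self

lemma exists_subset_of_sccEdge_of_lt {X : Finset α} {S T : Finset (Finset α)}
    {d : Finset α → Finset α → ℝ} {b τ : ℝ} (hS : IsPartition X S) (hST : Refines S T)
    (hacross : ∀ C ∈ T, ∀ C' ∈ T, C ≠ C' →
      ∀ A B, A ⊆ C → B ⊆ C' → A.Nonempty → B.Nonempty → b ≤ d A B)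
    (hτ : τ < b) {A B : Finset α} (hAB : sccEdge d τ S A B) :
    ∃ C ∈ T, A ⊆ C ∧ B ⊆ C := by
  obtain ⟨hA, hB, -, hle, -⟩ := hAB
  obtain ⟨C, hC, hAC⟩ := hST A hA
  obtain ⟨C', hC', hBC'⟩ := hST B hB
  by_cases hCC' : C = C'
  · exact ⟨C, hC, hAC, hCC' ▸ hBC'⟩
  · linarith [hacross C hC C' hC' hCC' A B hAC hBC' (hS.nonempty A hA) (hS.nonempty B hB)]

theorem mem_sccPartitions_of_linkage_gap {X : Finset α} {T : Finset (Finset α)}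
    {d : Finset α → Finset α → ℝ} {a b τ : ℝ} {τs τs' : List ℝ}
    (hd : ∀ A B, d A B = d B A) (hT : IsPartition X T)
    (hwithin : ∀ C ∈ T, ∀ A B, A ⊆ C → B ⊆ C → A.Nonempty → B.Nonempty → d A B ≤ a)
    (hacross : ∀ C ∈ T, ∀ C' ∈ T, C ≠ C' →
      ∀ A B, A ⊆ C → B ⊆ C' → A.Nonempty → B.Nonempty → b ≤ d A B)
    (hτs : ∀ τ' ∈ τs, τ' < b) (haτ : a ≤ τ) (hτb : τ < b) :
    T ∈ sccPartitions X d (τs ++ τ :: τs') := by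
  let P S := IsPartition X S ∧ Refines S T
  have hround : ∀ τ' < b, ∀ S, P S → P (sccRound d τ' S) := fun τ' hτ' S ⟨hS, hST⟩ =>
    ⟨isPartition_sccRound hd hS,
      refines_sccRound hS hT hST fun _ _ => exists_subset_of_sccEdge_of_lt hS hST hacross hτ'⟩
  have hrun : ∀ l : List ℝ, (∀ τ' ∈ l, τ' < b) → ∀ S, P S →
      P (l.foldl (fun S τ => (sccRound d τ)^[X.card] S) S) := by
    intro l hl
    induction l with
    | nil => exact fun S hS => hS
    | cons τ' l ih =>
      exact fun S hS => ih (fun τ'' h => hl τ'' (List.mem_cons_of_mem _ h)) _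
        (Function.Iterate.rec P hS (hround τ' (hl τ' List.mem_cons_self)) X.card)
  have hfix : sccRound d τ T = T := sccRound_eq_self fun A B ⟨hA, hB, hAB, hle, _⟩ => by
    linarith [hacross A hA B hB hAB A B subset_rfl subset_rfl (hT.nonempty A hA)
      (hT.nonempty B hB)]
  have hmerge : ∀ S, P S → S ≠ T → (sccRound d τ S).card < S.card := by
    rintro S ⟨hS, hST⟩ hne
    obtain ⟨A, hA, B, hB, hAB, C, hC, hAC, hBC⟩ := hS.exists_ne_subset_of_refines hT hST hne
    exact card_sccRound_lt hd hA hB hAB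
      ((hwithin C hC A B hAC hBC (hS.nonempty A hA) (hS.nonempty B hB)).trans haτ)
  obtain ⟨hS₁, hS₁T⟩ :=
    hrun τs hτs _ ⟨isPartition_singletonPartition, singletonPartition_refines hT⟩
  have hlast : (sccPartitions X d (τs ++ [τ])).getLastD (singletonPartition X) = T := by
    rw [getLastD_sccPartitions, List.foldl_concat]
    exact iterate_eq_of_measure_lt (hround τ hτb) hfix hmerge _ _ ⟨hS₁, hS₁T⟩ hS₁.card_le
  have hsplit : τs ++ τ :: τs' = τs ++ [τ] ++ τs' := by simp
  rw [hsplit]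
  exact (sccPartitions_prefix_append _ τs').subset (hlast ▸ getLastD_sccPartitions_mem _)

section Geometry

variable {E : Type*} [SeminormedAddCommGroup E]

lemma sq_norm_sub_le_four_mul {x y c : E} {r : ℝ} (hx : ‖x - c‖ ^ 2 ≤ r) (hy : ‖y - c‖ ^ 2 ≤ r) :
    ‖x - y‖ ^ 2 ≤ 4 * r := by
  have h := norm_sub_le_norm_sub_add_norm_sub x c y
  rw [norm_sub_rev c y] at h
  nlinarith [norm_nonneg (x - y), norm_nonneg (x - c), norm_nonneg (y - c),
    sq_nonneg (‖x - c‖ - ‖y - c‖)]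

/-- `√30 - 2 > 3`: the two radii eat at most `2√r` of the distance between the centres. -/
lemma nine_mul_le_sq_norm_sub {x y c c' : E} {r : ℝ} (hc : 30 * r ≤ ‖c - c'‖ ^ 2)
    (hx : ‖x - c‖ ^ 2 ≤ r) (hy : ‖y - c'‖ ^ 2 ≤ r) : 9 * r ≤ ‖x - y‖ ^ 2 := by
  have h : ‖c - c'‖ ≤ ‖x - c‖ + ‖x - y‖ + ‖y - c'‖ := by
    have := norm_sub_le_norm_sub_add_norm_sub c x c'
    have := norm_sub_le_norm_sub_add_norm_sub x y c'
    rw [norm_sub_rev c x] at *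
    linarith
  have h2 := pow_le_pow_left₀ (norm_nonneg _) h 2
  nlinarith [norm_nonneg (x - y), norm_nonneg (x - c), norm_nonneg (y - c'),
    sq_nonneg (‖x - c‖ - ‖y - c'‖), sq_nonneg (‖x - y‖ - 3 * ‖x - c‖),
    sq_nonneg (‖x - y‖ - 3 * ‖y - c'‖)]

end Geometry

section AvgLinkage

variable {n : ℕ} {A B : Finset (EuclideanSpace ℝ (Fin n))}

lemma avgLinkage_comm (A B : Finset (EuclideanSpace ℝ (Fin n))) :
    avgLinkage A B = avgLinkage B A := by
  simp only [avgLinkage]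
  rw [Finset.sum_comm, mul_comm]
  simp_rw [norm_sub_rev]

lemma le_avgLinkage (hA : A.Nonempty) (hB : B.Nonempty) {c : ℝ}
    (h : ∀ a ∈ A, ∀ b ∈ B, c ≤ ‖a - b‖ ^ 2) : c ≤ avgLinkage A B := by
  have hAB : (0 : ℝ) < A.card * B.card := by have := hA.card_pos; have := hB.card_pos; positivity
  have := Finset.card_nsmul_le_sum (A ×ˢ B) (fun p => ‖p.1 - p.2‖ ^ 2) c
    fun p hp => h p.1 (Finset.mem_product.mp hp).1 p.2 (Finset.mem_product.mp hp).2
  rw [Finset.sum_product, Finset.card_product, nsmul_eq_mul] at this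
  rw [avgLinkage, le_div_iff₀ hAB]
  push_cast at this
  linarith

lemma avgLinkage_le (hA : A.Nonempty) (hB : B.Nonempty) {c : ℝ}
    (h : ∀ a ∈ A, ∀ b ∈ B, ‖a - b‖ ^ 2 ≤ c) : avgLinkage A B ≤ c := by
  have hAB : (0 : ℝ) < A.card * B.card := by have := hA.card_pos; have := hB.card_pos; positivity
  have := Finset.sum_le_card_nsmul (A ×ˢ B) (fun p => ‖p.1 - p.2‖ ^ 2) c
    fun p hp => h p.1 (Finset.mem_product.mp hp).1 p.2 (Finset.mem_product.mp hp).2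
  rw [Finset.sum_product, Finset.card_product, nsmul_eq_mul] at this
  rw [avgLinkage, div_le_iff₀ hAB]
  push_cast at this
  linarith

end AvgLinkage

lemma exists_first_pow_two_mul_ge {a τ₀ : ℝ} {L : ℕ} (ha : 0 ≤ a) (hτ₀ : τ₀ ≤ a)
    (hL : a ≤ 2 ^ L * τ₀) :
    ∃ i ≤ L, (∀ j < i, 2 ^ j * τ₀ < a) ∧ a ≤ 2 ^ i * τ₀ ∧ 2 ^ i * τ₀ ≤ 2 * a := by
  have hex : ∃ i, a ≤ 2 ^ i * τ₀ := ⟨L, hL⟩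
  refine ⟨Nat.find hex, Nat.find_min' hex hL, fun j hj => not_le.mp (Nat.find_min hex hj),
    Nat.find_spec hex, ?_⟩
  rcases h : Nat.find hex with _ | i
  · linarith [pow_zero (2 : ℝ)]
  · have := not_le.mp (Nat.find_min hex (show i < Nat.find hex by omega))
    rw [pow_succ]
    linarith

lemma List.exists_range_eq_append_cons {i n : ℕ} (h : i < n) :
    ∃ l, List.range n = List.range i ++ i :: l := by
  obtain ⟨k, rfl⟩ := Nat.exists_eq_add_of_lt h
  exact ⟨(List.range k).map (i + 1 + ·), by
    rw [show i + k + 1 = i + 1 + k by omega, List.range_add, List.range_succ]; simp⟩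

theorem scc_recovers_target_partition_general {d : ℕ}
    (X : Finset (EuclideanSpace ℝ (Fin d)))
    (Sstar : Finset (Finset (EuclideanSpace ℝ (Fin d))))
    (cen : Finset (EuclideanSpace ℝ (Fin d)) → EuclideanSpace ℝ (Fin d))
    (δ R τ0 : ℝ) (L : ℕ) (hδ : 30 ≤ δ)
    -- `Sstar` is a partition of `X`
    (hne : ∀ A ∈ Sstar, A.Nonempty)
    (hdisj : ∀ A ∈ Sstar, ∀ B ∈ Sstar, A ≠ B → Disjoint A B)
    (hcover : Sstar.sup id = X)
    -- `R` is the maximal squared distance of a point to its cluster center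
    (hRle : ∀ A ∈ Sstar, ∀ x ∈ A, ‖x - cen A‖ ^ 2 ≤ R)
    -- squared `δ`-separation of the centers
    (hsep : ∀ A ∈ Sstar, ∀ B ∈ Sstar, A ≠ B → δ * R ≤ ‖cen A - cen B‖ ^ 2)
    -- thresholds: `τ0` below the minimum pairwise squared distance, last one `≥ 8R`
    (hτ0 : ∀ x ∈ X, ∀ y ∈ X, x ≠ y → τ0 ≤ ‖x - y‖ ^ 2)
    (hL : 8 * R ≤ 2 ^ L * τ0) :
    Sstar ∈
      sccPartitions X avgLinkage ((List.range (L + 1)).map fun i => 2 ^ i * τ0) := by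
  have hT : IsPartition X Sstar := ⟨hne, hdisj, by simp [← hcover, Finset.mem_sup]⟩
  have hdiam : ∀ C ∈ Sstar, ∀ x ∈ C, ∀ y ∈ C, ‖x - y‖ ^ 2 ≤ 4 * R :=
    fun C hC x hx y hy => sq_norm_sub_le_four_mul (hRle C hC x hx) (hRle C hC y hy)
  by_cases hsing : Sstar = singletonPartition X
  · exact hsing ▸ singletonPartition_mem_sccPartitions _
  obtain ⟨x, hx, y, hy, hxy, C, hC, hxC, hyC⟩ := by
    simpa [singletonPartition] using isPartition_singletonPartition.exists_ne_subset_of_refines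
      hT (singletonPartition_refines hT) (Ne.symm hsing)
  have hRpos : 0 < R := by
    have := hdiam C hC x hxC y hyC
    have : 0 < ‖x - y‖ := norm_pos_iff.mpr (sub_ne_zero.mpr hxy)
    nlinarith
  have hτ0R : τ0 ≤ 4 * R := (hτ0 x hx y hy hxy).trans (hdiam C hC x hxC y hyC)
  obtain ⟨i, hiL, hbefore, hi4R, hi8R⟩ :=
    exists_first_pow_two_mul_ge (by linarith) hτ0R (by linarith : 4 * R ≤ 2 ^ L * τ0)
  obtain ⟨τs', hrange⟩ := List.exists_range_eq_append_cons (Nat.lt_succ_of_le hiL)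
  rw [hrange, List.map_append, List.map_cons]
  refine mem_sccPartitions_of_linkage_gap (a := 4 * R) (b := 9 * R) avgLinkage_comm hT
    (fun C hC A B hAC hBC hA hB => avgLinkage_le hA hB fun a ha b hb =>
      hdiam C hC a (hAC ha) b (hBC hb))
    (fun C hC C' hC' hCC' A B hAC hBC' hA hB => le_avgLinkage hA hB fun a ha b hb =>
      nine_mul_le_sq_norm_sub (by nlinarith [hsep C hC C' hC' hCC']) (hRle C hC a (hAC ha))
        (hRle C' hC' b (hBC' hb)))
    ?_ hi4R (by linarith)
  simp only [List.mem_map, List.mem_range]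
  rintro _ ⟨j, hj, rfl⟩
  linarith [hbefore j hj]

/-- **Theorem 1.** On squared `δ`-separated data with `δ ≥ 30`,
SCC with average squared-distance linkage and geometrically increasing
thresholds `τ_i = 2^i · τ0`, with `τ0` at most the minimum pairwise squared
distance and `2^L · τ0 ≥ 8R`, produces the target partition in one of its
rounds. -/
theorem scc_recovers_target_partition {d : ℕ}
    (X : Finset (EuclideanSpace ℝ (Fin d)))
    (Sstar : Finset (Finset (EuclideanSpace ℝ (Fin d))))
    (cen : Finset (EuclideanSpace ℝ (Fin d)) → EuclideanSpace ℝ (Fin d))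
    (δ R τ0 : ℝ) (L : ℕ) (hδ : 30 ≤ δ) (hR : 0 < R)
    -- `Sstar` is a partition of `X`
    (hne : ∀ A ∈ Sstar, A.Nonempty)
    (hdisj : ∀ A ∈ Sstar, ∀ B ∈ Sstar, A ≠ B → Disjoint A B)
    (hcover : Sstar.sup id = X)
    -- `R` is the maximal squared distance of a point to its cluster center
    (hRle : ∀ A ∈ Sstar, ∀ x ∈ A, ‖x - cen A‖ ^ 2 ≤ R)
    (hRmax : ∃ A ∈ Sstar, ∃ x ∈ A, ‖x - cen A‖ ^ 2 = R)
    -- squared `δ`-separation of the centers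
    (hsep : ∀ A ∈ Sstar, ∀ B ∈ Sstar, A ≠ B → δ * R ≤ ‖cen A - cen B‖ ^ 2)
    -- thresholds: `τ0` below the minimum pairwise squared distance, last one `≥ 8R`
    (hτ0pos : 0 < τ0)
    (hτ0 : ∀ x ∈ X, ∀ y ∈ X, x ≠ y → τ0 ≤ ‖x - y‖ ^ 2)
    (hL : 8 * R ≤ 2 ^ L * τ0) :
    Sstar ∈
      sccPartitions X avgLinkage ((List.range (L + 1)).map fun i => 2 ^ i * τ0) :=
  scc_recovers_target_partition_general X Sstar cen δ R τ0 L hδ hne hdisj hcover hRle hsep hτ0 hL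
end

section
/- (Proposition 2) Let X be a finite set and let d be a linkage function on pairs of disjoint nonempty subsets of X that is symmetric (d(A,B) = d(B,A)), injective (d(C_1,C_2) = d(C_3,C_4) implies {C_1,C_2} = {C_3,C_4}), and reducible (for all pairwise disjoint nonempty C, C', C'' ⊆ X, if d(C,C') ≤ min{d(C,C''), d(C',C'')} then min{d(C,C''), d(C',C'')} ≤ d(C ∪ C', C'')). Let T be the hierarchical clustering produced by bottom-up hierarchical agglomerative clustering (HAC) with linkage d, which starts from singletons and repeatedly merges the pair of current clusters with minimum linkage until one cluster remains. Then there exists a sequence of thresholds τ_1 ≤ … ≤ τ_r such that the collection of all clusters appearing in the partitions output by the SCC algorithm run on X with linkage d and thresholds τ_1, …, τ_r equals the set of clusters of T. -/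
/-!
Under an injective linkage the minimum-linkage pair `A, B` of a partition is unique, so at the
threshold `τ = d A B` the only sub-cluster edges are `A → B` and `B → A`: one SCC round performs
exactly the HAC merge. Reducibility makes every linkage of the merged partition exceed `τ`, so
further rounds at `τ` change nothing and the merge values increase along the HAC chain. Running
SCC with the HAC merge values as thresholds therefore reproduces the HAC partitions.
-/

open Finset
open scoped Classical

variable {α : Type*}

/-- One step of hierarchical agglomerative clustering: `S'` is obtained from
`S` by merging a pair of distinct clusters of `S` of minimum linkage. -/
def IsMinMerge (d : Finset α → Finset α → ℝ)
    (S S' : Finset (Finset α)) : Prop :=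
  ∃ A ∈ S, ∃ B ∈ S, A ≠ B ∧
    (∀ A' ∈ S, ∀ B' ∈ S, A' ≠ B' → d A B ≤ d A' B') ∧
    S' = insert (A ∪ B) ((S.erase A).erase B)

/-- `Ss` is the sequence of partitions produced by bottom-up HAC on `X` with
linkage `d`: it starts from the singletons, each partition is obtained from the
previous one by a minimum-linkage merge, and it ends with a single cluster. -/
def IsHACChain (d : Finset α → Finset α → ℝ) (X : Finset α)
    (Ss : List (Finset (Finset α))) : Prop :=
  Ss.head? = some (singletonPartition X) ∧
  List.Chain' (IsMinMerge d) Ss ∧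
  ∃ S, Ss.getLast? = some S ∧ S.card = 1

def IsClustering (X : Finset α) (S : Finset (Finset α)) : Prop :=
  (∀ C ∈ S, C ⊆ X ∧ C.Nonempty) ∧ (S : Set (Finset α)).PairwiseDisjoint id

noncomputable def mergeClusters (S : Finset (Finset α)) (A B : Finset α) : Finset (Finset α) :=
  insert (A ∪ B) ((S.erase A).erase B)

def LinkageInjective (X : Finset α) (d : Finset α → Finset α → ℝ) : Prop :=
  ∀ C₁ C₂ C₃ C₄ : Finset α,
    C₁ ⊆ X → C₂ ⊆ X → C₃ ⊆ X → C₄ ⊆ X →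
    C₁.Nonempty → C₂.Nonempty → C₃.Nonempty → C₄.Nonempty →
    Disjoint C₁ C₂ → Disjoint C₃ C₄ → d C₁ C₂ = d C₃ C₄ →
    (C₁ = C₃ ∧ C₂ = C₄) ∨ (C₁ = C₄ ∧ C₂ = C₃)

def LinkageReducible (X : Finset α) (d : Finset α → Finset α → ℝ) : Prop :=
  ∀ C C' C'' : Finset α,
    C ⊆ X → C' ⊆ X → C'' ⊆ X →
    C.Nonempty → C'.Nonempty → C''.Nonempty →
    Disjoint C C' → Disjoint C C'' → Disjoint C' C'' →
    d C C' ≤ min (d C C'') (d C' C'') →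
    min (d C C'') (d C' C'') ≤ d (C ∪ C') C''

section Clustering

variable {X : Finset α} {S : Finset (Finset α)} {A B : Finset α}

lemma isClustering_singletonPartition (X : Finset α) :
    IsClustering X (singletonPartition X) := by
  refine ⟨?_, ?_⟩
  · simp only [singletonPartition, mem_image]
    rintro _ ⟨x, hx, rfl⟩
    exact ⟨singleton_subset_iff.mpr hx, singleton_nonempty x⟩
  · rintro _ hC _ hD hCD
    simp only [singletonPartition, coe_image, Set.mem_image, mem_coe] at hC hD
    obtain ⟨x, -, rfl⟩ := hC
    obtain ⟨y, -, rfl⟩ := hD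
    exact disjoint_singleton.mpr fun hxy => hCD (hxy ▸ rfl)

lemma mem_mergeClusters {C : Finset α} :
    C ∈ mergeClusters S A B ↔ C = A ∪ B ∨ (C ≠ B ∧ C ≠ A ∧ C ∈ S) := by
  simp only [mergeClusters, mem_insert, mem_erase]

lemma IsClustering.mergeClusters (hS : IsClustering X S) (hA : A ∈ S) (hB : B ∈ S) :
    IsClustering X (mergeClusters S A B) := by
  have hdisj : ∀ D, D ≠ B → D ≠ A → D ∈ S → Disjoint (A ∪ B) D := fun D hDB hDA hD =>
    disjoint_union_left.mpr ⟨hS.2 hA hD (Ne.symm hDA), hS.2 hB hD (Ne.symm hDB)⟩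
  refine ⟨fun C hC => ?_, fun C hC D hD hCD => ?_⟩
  · rcases mem_mergeClusters.mp hC with rfl | ⟨-, -, hC⟩
    · exact ⟨union_subset (hS.1 A hA).1 (hS.1 B hB).1, (hS.1 A hA).2.mono subset_union_left⟩
    · exact hS.1 C hC
  · rcases mem_mergeClusters.mp hC, mem_mergeClusters.mp hD with
      ⟨rfl | ⟨hCB, hCA, hC⟩, rfl | ⟨hDB, hDA, hD⟩⟩
    · exact absurd rfl hCD
    · exact hdisj D hDB hDA hD
    · exact (hdisj C hCB hCA hC).symm
    · exact hS.2 hC hD hCD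

lemma LinkageInjective.eq_or_eq_of_linkage_eq {d : Finset α → Finset α → ℝ}
    (hinj : LinkageInjective X d) (hS : IsClustering X S) (hA : A ∈ S) (hB : B ∈ S)
    (hAB : A ≠ B) :
    ∀ C ∈ S, ∀ D ∈ S, C ≠ D → d C D = d A B → (C = A ∧ D = B) ∨ (C = B ∧ D = A) :=
  fun C hC D hD hCD => hinj C D A B (hS.1 C hC).1 (hS.1 D hD).1 (hS.1 A hA).1 (hS.1 B hB).1
    (hS.1 C hC).2 (hS.1 D hD).2 (hS.1 A hA).2 (hS.1 B hB).2 (hS.2 hC hD hCD) (hS.2 hA hB hAB)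

end Clustering

lemma reflTransGen_iff_of_rel_iff_pair {β : Type*} {r : β → β → Prop} {a b : β}
    (hr : ∀ x y, r x y ↔ (x = a ∧ y = b) ∨ (x = b ∧ y = a)) (x y : β) :
    Relation.ReflTransGen r x y ↔ y = x ∨ ((x = a ∨ x = b) ∧ (y = a ∨ y = b)) := by
  refine ⟨fun h => ?_, ?_⟩
  · rcases Relation.ReflTransGen.cases_head_iff.mp h with rfl | ⟨z, hxz, -⟩
    · exact Or.inl rfl
    rcases (Relation.ReflTransGen.cases_tail_iff _ _ _).mp h with rfl | ⟨w, -, hwy⟩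
    · exact Or.inl rfl
    have := (hr x z).mp hxz
    have := (hr w y).mp hwy
    tauto
  · have hab := Relation.ReflTransGen.single ((hr a b).mpr (Or.inl ⟨rfl, rfl⟩))
    have hba := Relation.ReflTransGen.single ((hr b a).mpr (Or.inr ⟨rfl, rfl⟩))
    rintro (rfl | ⟨rfl | rfl, rfl | rfl⟩) <;> first | exact .refl | assumption

section Round

variable {d : Finset α → Finset α → ℝ} {τ : ℝ} {S : Finset (Finset α)}

lemma sccComponent_eq_self {C : Finset α} (hC : C ∈ S) (h : ∀ D, ¬ sccEdge d τ S C D) :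
    sccComponent d τ S C = C := by
  have hreach : ∀ D, Relation.ReflTransGen (sccEdge d τ S) C D ↔ D = C := fun D =>
    ⟨fun hCD => (Relation.ReflTransGen.cases_head_iff.mp hCD).elim Eq.symm
      fun ⟨E, hCE, _⟩ => (h E hCE).elim, fun hDC => hDC ▸ .refl⟩
  rw [sccComponent, filter_congr fun D _ => hreach D, filter_eq' S C, if_pos hC, sup_singleton,
    id]

lemma sccRound_eq_self_s7 (h : ∀ C ∈ S, ∀ D ∈ S, C ≠ D → τ < d C D) : sccRound d τ S = S := by
  have hnone : ∀ C D, ¬ sccEdge d τ S C D := fun C D ⟨hC, hD, hCD, hle, _⟩ =>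
    (h C hC D hD hCD).not_ge hle
  rw [sccRound, image_congr fun C hC => sccComponent_eq_self hC (hnone C), image_id']

lemma sccEdge_iff_of_isLeast {A B : Finset α} (hA : A ∈ S) (hB : B ∈ S) (hAB : A ≠ B)
    (hBA : d B A ≤ d A B) (hmin : ∀ C ∈ S, ∀ D ∈ S, C ≠ D → d A B ≤ d C D)
    (hunique : ∀ C ∈ S, ∀ D ∈ S, C ≠ D → d C D = d A B → (C = A ∧ D = B) ∨ (C = B ∧ D = A))
    (C D : Finset α) :
    sccEdge d (d A B) S C D ↔ (C = A ∧ D = B) ∨ (C = B ∧ D = A) := by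
  have hminA : ∀ C ∈ S, C ≠ A → d A B ≤ d A C := fun C hC hCA => hmin A hA C hC hCA.symm
  refine ⟨fun ⟨hC, hD, hCD, hle, _⟩ => hunique C hC D hD hCD (hle.antisymm (hmin C hC D hD hCD)),
    ?_⟩
  rintro (⟨rfl, rfl⟩ | ⟨rfl, rfl⟩)
  · exact ⟨hA, hB, hAB, le_rfl, Or.inl hminA⟩
  · exact ⟨hB, hA, hAB.symm, hBA, Or.inr hminA⟩

lemma sccRound_eq_mergeClusters {A B : Finset α} (hA : A ∈ S) (hB : B ∈ S) (hAB : A ≠ B)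
    (hBA : d B A ≤ d A B) (hmin : ∀ C ∈ S, ∀ D ∈ S, C ≠ D → d A B ≤ d C D)
    (hunique : ∀ C ∈ S, ∀ D ∈ S, C ≠ D → d C D = d A B → (C = A ∧ D = B) ∨ (C = B ∧ D = A)) :
    sccRound d (d A B) S = mergeClusters S A B := by
  have hedge := sccEdge_iff_of_isLeast hA hB hAB hBA hmin hunique
  have hreach := reflTransGen_iff_of_rel_iff_pair hedge
  have hcomp : ∀ C ∈ S, sccComponent d (d A B) S C = if C = A ∨ C = B then A ∪ B else C := by
    intro C hC
    split_ifs with hCAB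
    · have : S.filter (Relation.ReflTransGen (sccEdge d (d A B) S) C) = {A, B} := by
        ext D
        simp only [mem_filter, hreach, mem_insert, mem_singleton]
        constructor
        · rintro ⟨-, rfl | ⟨-, hD⟩⟩ <;> assumption
        · rintro (rfl | rfl) <;> simp_all
      simp [sccComponent, this]
    · exact sccComponent_eq_self hC fun D hCD => hCAB (by have := (hedge C D).mp hCD; tauto)
  ext P
  simp only [sccRound, mem_image, mem_mergeClusters]
  constructor
  · rintro ⟨C, hC, rfl⟩
    rw [hcomp C hC]
    split_ifs with hCAB
    · exact Or.inl rfl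
    · rw [not_or] at hCAB
      exact Or.inr ⟨hCAB.2, hCAB.1, hC⟩
  · rintro (rfl | ⟨hPB, hPA, hP⟩)
    · exact ⟨A, hA, by simp [hcomp A hA]⟩
    · exact ⟨P, hP, by simp [hcomp P hP, hPA, hPB]⟩

end Round

/-- Reducibility is what keeps the linkages of the merged cluster `A ∪ B` above `d A B`. -/
lemma lt_linkage_of_mem_mergeClusters {X : Finset α} {d : Finset α → Finset α → ℝ}
    {S : Finset (Finset α)} {A B : Finset α} (hsym : ∀ C D : Finset α, d C D = d D C)
    (hred : LinkageReducible X d) (hS : IsClustering X S) (hA : A ∈ S) (hB : B ∈ S)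
    (hAB : A ≠ B) (hmin : ∀ C ∈ S, ∀ D ∈ S, C ≠ D → d A B ≤ d C D)
    (hunique : ∀ C ∈ S, ∀ D ∈ S, C ≠ D → d C D = d A B → (C = A ∧ D = B) ∨ (C = B ∧ D = A)) :
    ∀ C ∈ mergeClusters S A B, ∀ D ∈ mergeClusters S A B, C ≠ D → d A B < d C D := by
  have hlt : ∀ C ∈ S, ∀ D ∈ S, C ≠ D → ¬((C = A ∧ D = B) ∨ (C = B ∧ D = A)) →
      d A B < d C D := fun C hC D hD hCD hne =>
    (hmin C hC D hD hCD).lt_of_ne fun h => hne (hunique C hC D hD hCD h.symm)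
  have hunion : ∀ D, D ≠ B → D ≠ A → D ∈ S → d A B < d (A ∪ B) D := by
    intro D hDB hDA hD
    have hAD := hlt A hA D hD (Ne.symm hDA) (by tauto)
    have hBD := hlt B hB D hD (Ne.symm hDB) (by tauto)
    calc d A B < min (d A D) (d B D) := lt_min hAD hBD
      _ ≤ d (A ∪ B) D := hred A B D (hS.1 A hA).1 (hS.1 B hB).1 (hS.1 D hD).1 (hS.1 A hA).2
          (hS.1 B hB).2 (hS.1 D hD).2 (hS.2 hA hB hAB) (hS.2 hA hD (Ne.symm hDA))
          (hS.2 hB hD (Ne.symm hDB)) (le_min hAD.le hBD.le)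
  intro C hC D hD hCD
  rcases mem_mergeClusters.mp hC, mem_mergeClusters.mp hD with
    ⟨rfl | ⟨hCB, hCA, hC⟩, rfl | ⟨hDB, hDA, hD⟩⟩
  · exact absurd rfl hCD
  · exact hunion D hDB hDA hD
  · exact hsym C (A ∪ B) ▸ hunion C hCB hCA hC
  · exact hlt C hC D hD hCD (by tauto)

section Partitions

variable {X : Finset α} {d : Finset α → Finset α → ℝ}

lemma sccAtThreshold_eq_replicate {τ : ℝ} {S S' : Finset (Finset α)}
    (h₁ : sccRound d τ S = S') (h₂ : sccRound d τ S' = S') (n : ℕ) :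
    sccAtThreshold d τ n S = List.replicate n S' := by
  have hiter : ∀ k, (sccRound d τ)^[k + 1] S = S' := fun k => by
    rw [Function.iterate_succ_apply, h₁, Function.iterate_fixed h₂]
  simp [sccAtThreshold, hiter]

noncomputable def sccStep (X : Finset α) (d : Finset α → Finset α → ℝ)
    (acc : List (Finset (Finset α))) (τ : ℝ) : List (Finset (Finset α)) :=
  acc ++ sccAtThreshold d τ X.card (acc.getLastD (singletonPartition X))

lemma sccPartitions_eq_foldl (τs : List ℝ) :
    sccPartitions X d τs = τs.foldl (sccStep X d) [singletonPartition X] :=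
  rfl

lemma foldl_sccStep_cons {τ : ℝ} {τs : List ℝ} {acc : List (Finset (Finset α))}
    {S S' : Finset (Finset α)} (hlast : acc.getLast? = some S)
    (h₁ : sccRound d τ S = S') (h₂ : sccRound d τ S' = S') :
    (τ :: τs).foldl (sccStep X d) acc =
      τs.foldl (sccStep X d) (acc ++ List.replicate X.card S') := by
  rw [List.foldl_cons, sccStep, List.getLastD_eq_getLast?, hlast, Option.getD_some,
    sccAtThreshold_eq_replicate h₁ h₂]

/-- The thresholds are the HAC merge values; their lower bound by a linkage of `S` is the
invariant that makes them increase. -/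
lemma exists_thresholds_of_isChain (hsym : ∀ C D : Finset α, d C D = d D C)
    (hinj : LinkageInjective X d) (hred : LinkageReducible X d) :
    ∀ (tail : List (Finset (Finset α))) {S : Finset (Finset α)}, IsClustering X S →
      List.IsChain (IsMinMerge d) (S :: tail) →
      ∃ τs : List ℝ, τs.Pairwise (· ≤ ·) ∧ (∀ τ ∈ τs, ∃ C ∈ S, ∃ D ∈ S, C ≠ D ∧ d C D ≤ τ) ∧
        ∀ acc, acc.getLast? = some S → ∀ P, P ∈ τs.foldl (sccStep X d) acc ↔ P ∈ acc ++ tail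
  | [], _, _, _ => ⟨[], .nil, by simp, fun _ _ _ => by simp⟩
  | T :: rest, S, hS, hchain => by
    obtain ⟨⟨A, hA, B, hB, hAB, hmin, hT⟩, hchain⟩ := List.isChain_cons_cons.mp hchain
    obtain rfl : T = mergeClusters S A B := hT
    have hunique := hinj.eq_or_eq_of_linkage_eq hS hA hB hAB
    have hgt := lt_linkage_of_mem_mergeClusters hsym hred hS hA hB hAB hmin hunique
    have hround := sccRound_eq_mergeClusters hA hB hAB (hsym B A).le hmin hunique
    have hfix := sccRound_eq_self_s7 hgt
    have hcard : X.card ≠ 0 := (card_pos.mpr ((hS.1 A hA).2.mono (hS.1 A hA).1)).ne'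
    obtain ⟨τs, hsorted, hlower, hmem⟩ :=
      exists_thresholds_of_isChain hsym hinj hred rest (hS.mergeClusters hA hB) hchain
    have hgt_of_mem : ∀ τ ∈ τs, d A B < τ := fun τ hτ => by
      obtain ⟨C, hC, D, hD, hCD, hle⟩ := hlower τ hτ
      exact (hgt C hC D hD hCD).trans_le hle
    refine ⟨d A B :: τs, List.pairwise_cons.mpr ⟨fun τ hτ => (hgt_of_mem τ hτ).le, hsorted⟩,
      fun τ hτ => ⟨A, hA, B, hB, hAB, ?_⟩, fun acc hlast P => ?_⟩
    · rcases List.mem_cons.mp hτ with rfl | hτ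
      exacts [le_rfl, (hgt_of_mem τ hτ).le]
    · have hlast' : (acc ++ List.replicate X.card (mergeClusters S A B)).getLast? =
          some (mergeClusters S A B) := by
        simp [List.getLast?_append, List.getLast?_replicate, hcard]
      rw [foldl_sccStep_cons hlast hround hfix, hmem _ hlast' P]
      simp [List.mem_replicate, hcard]

end Partitions

theorem scc_generalizes_hac_general (X : Finset α)
    (d : Finset α → Finset α → ℝ)
    -- symmetry
    (hsym : ∀ A B : Finset α, d A B = d B A)
    -- injectivity on pairs of disjoint nonempty subsets of `X`
    (hinj : ∀ C₁ C₂ C₃ C₄ : Finset α,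
      C₁ ⊆ X → C₂ ⊆ X → C₃ ⊆ X → C₄ ⊆ X →
      C₁.Nonempty → C₂.Nonempty → C₃.Nonempty → C₄.Nonempty →
      Disjoint C₁ C₂ → Disjoint C₃ C₄ → d C₁ C₂ = d C₃ C₄ →
      (C₁ = C₃ ∧ C₂ = C₄) ∨ (C₁ = C₄ ∧ C₂ = C₃))
    -- reducibility
    (hred : ∀ C C' C'' : Finset α,
      C ⊆ X → C' ⊆ X → C'' ⊆ X →
      C.Nonempty → C'.Nonempty → C''.Nonempty →
      Disjoint C C' → Disjoint C C'' → Disjoint C' C'' →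
      d C C' ≤ min (d C C'') (d C' C'') →
      min (d C C'') (d C' C'') ≤ d (C ∪ C') C'')
    -- `Ss` is the sequence of partitions produced by HAC; its clusters form the HAC tree
    (Ss : List (Finset (Finset α))) (hSs : IsHACChain d X Ss) :
    ∃ τs : List ℝ, τs.Pairwise (· ≤ ·) ∧
      {C | ∃ P ∈ sccPartitions X d τs, C ∈ P} =
        {C | ∃ S ∈ Ss, C ∈ S} := by
  obtain ⟨hhead, hchain, -⟩ := hSs
  obtain ⟨tail, rfl⟩ := List.head?_eq_some_iff.mp hhead
  obtain ⟨τs, hsorted, -, hmem⟩ := exists_thresholds_of_isChain hsym hinj hred tail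
    (isClustering_singletonPartition X) hchain
  refine ⟨τs, hsorted, Set.ext fun C => ?_⟩
  simp only [Set.mem_ofPred_eq, sccPartitions_eq_foldl, hmem [singletonPartition X] rfl,
    List.singleton_append]

/-- **Proposition 2.** For a symmetric, injective, reducible
linkage `d`, there is a sequence of increasing thresholds for which the set of
clusters produced by SCC equals the set of clusters of the HAC tree. -/
theorem scc_generalizes_hac (X : Finset α) (hX : X.Nonempty)
    (d : Finset α → Finset α → ℝ)
    -- symmetry
    (hsym : ∀ A B : Finset α, d A B = d B A)
    -- injectivity on pairs of disjoint nonempty subsets of `X`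
    (hinj : ∀ C₁ C₂ C₃ C₄ : Finset α,
      C₁ ⊆ X → C₂ ⊆ X → C₃ ⊆ X → C₄ ⊆ X →
      C₁.Nonempty → C₂.Nonempty → C₃.Nonempty → C₄.Nonempty →
      Disjoint C₁ C₂ → Disjoint C₃ C₄ → d C₁ C₂ = d C₃ C₄ →
      (C₁ = C₃ ∧ C₂ = C₄) ∨ (C₁ = C₄ ∧ C₂ = C₃))
    -- reducibility
    (hred : ∀ C C' C'' : Finset α,
      C ⊆ X → C' ⊆ X → C'' ⊆ X →
      C.Nonempty → C'.Nonempty → C''.Nonempty →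
      Disjoint C C' → Disjoint C C'' → Disjoint C' C'' →
      d C C' ≤ min (d C C'') (d C' C'') →
      min (d C C'') (d C' C'') ≤ d (C ∪ C') C'')
    -- `Ss` is the sequence of partitions produced by HAC; its clusters form the HAC tree
    (Ss : List (Finset (Finset α))) (hSs : IsHACChain d X Ss) :
    ∃ τs : List ℝ, τs.Pairwise (· ≤ ·) ∧
      {C | ∃ P ∈ sccPartitions X d τs, C ∈ P} =
        {C | ∃ S ∈ Ss, C ∈ S} :=
  scc_generalizes_hac_general X d hsym hinj hred Ss hSs
end

section
/- (Proposition, facility location to DP-means) Let X ⊆ ℝ^d be a finite nonempty set and λ > 0. Then min over all DP-Facility solutions (I, φ) of [Σ_{x∈X} ‖x − φ(x)‖² + λ·|I|] ≤ 2 · min over all partitions S of X and centers c of DP(X, λ, S, c). In particular, the clustering induced by an optimal DP-Facility solution, with its opened facilities as centers, has DP-means cost at most twice the optimal DP-means cost. -/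
open Finset
open scoped Classical

/-- The DP-means cost of a partition `S` with centers `c` and penalty `lam`. -/
noncomputable def dpMeansCost {d : ℕ} (lam : ℝ)
    (S : Finset (Finset (EuclideanSpace ℝ (Fin d))))
    (c : Finset (EuclideanSpace ℝ (Fin d)) → EuclideanSpace ℝ (Fin d)) : ℝ :=
  (∑ A ∈ S, ∑ x ∈ A, ‖x - c A‖ ^ 2) + lam * S.card

/-!
Summing `‖x - y‖²` over all pairs of points of a cluster `A` gives
`2 |A| Σ ‖x - c‖² - 2 ‖Σ (x - c)‖²` for any center `c`, so on average, and hence for some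
`y ∈ A`, the point `y` serves `A` at most twice as expensively as `c` does. Opening one such
point per cluster costs at most `λ` per cluster.
-/

theorem Finpartition.sum_eq_sum_sum_parts {α M : Type*} [DecidableEq α] [AddCommMonoid M]
    {s : Finset α} (P : Finpartition s) (f : α → M) :
    ∑ x ∈ s, f x = ∑ t ∈ P.parts, ∑ x ∈ t, f x := by
  conv_lhs => rw [← P.biUnion_parts]
  exact sum_biUnion P.supIndep.pairwiseDisjoint

section

variable {E : Type*} [NormedAddCommGroup E] [InnerProductSpace ℝ E]

theorem sum_sum_norm_sub_sq {ι : Type*} (s : Finset ι) (u : ι → E) :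
    ∑ i ∈ s, ∑ j ∈ s, ‖u j - u i‖ ^ 2 =
      2 * #s * ∑ i ∈ s, ‖u i‖ ^ 2 - 2 * ‖∑ i ∈ s, u i‖ ^ 2 := by
  simp only [norm_sub_sq_real, sum_add_distrib, sum_sub_distrib, sum_const, nsmul_eq_mul,
    ← mul_sum, ← sum_inner, ← inner_sum, real_inner_self_eq_norm_sq]
  ring

theorem exists_mem_sum_norm_sub_sq_le_two_mul {A : Finset E} (hA : A.Nonempty) (c : E) :
    ∃ y ∈ A, ∑ x ∈ A, ‖x - y‖ ^ 2 ≤ 2 * ∑ x ∈ A, ‖x - c‖ ^ 2 := by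
  refine exists_le_of_sum_le hA ?_
  have hpairs := sum_sum_norm_sub_sq A (· - c)
  simp only [sub_sub_sub_cancel_right] at hpairs
  rw [hpairs, sum_const, nsmul_eq_mul]
  nlinarith [sq_nonneg ‖∑ x ∈ A, (x - c)‖]

theorem Finpartition.exists_mem_parts_sum_norm_sub_sq_le_two_mul [DecidableEq E] {X : Finset E}
    (P : Finpartition X) (c : Finset E → E) :
    ∃ F : Finset E → E, (∀ A ∈ P.parts, F A ∈ A) ∧
      ∑ x ∈ X, ‖x - F (P.part x)‖ ^ 2 ≤ 2 * ∑ A ∈ P.parts, ∑ x ∈ A, ‖x - c A‖ ^ 2 := by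
  choose! F hFmem hF using fun A (hA : A ∈ P.parts) =>
    exists_mem_sum_norm_sub_sq_le_two_mul (P.nonempty_of_mem_parts hA) (c A)
  refine ⟨F, hFmem, ?_⟩
  rw [P.sum_eq_sum_sum_parts, mul_sum]
  refine sum_le_sum fun A hA => ?_
  calc ∑ x ∈ A, ‖x - F (P.part x)‖ ^ 2 = ∑ x ∈ A, ‖x - F A‖ ^ 2 :=
        sum_congr rfl fun x hx => by rw [P.part_eq_of_mem hA hx]
    _ ≤ 2 * ∑ x ∈ A, ‖x - c A‖ ^ 2 := hF A hA

end

/-- The optimal DP-Facility cost is at most twice the optimal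
DP-means cost: for every partition of `X` with arbitrary centers, there is a
DP-Facility solution of at most twice its DP-means cost. -/
theorem dp_facility_le_two_mul_dp_means {d : ℕ}
    (X : Finset (EuclideanSpace ℝ (Fin d))) (hX : X.Nonempty)
    (lam : ℝ) (hlam : 0 < lam) :
    ∀ (S : Finset (Finset (EuclideanSpace ℝ (Fin d))))
      (c : Finset (EuclideanSpace ℝ (Fin d)) → EuclideanSpace ℝ (Fin d)),
      (∀ A ∈ S, A.Nonempty) →
      (∀ A ∈ S, ∀ B ∈ S, A ≠ B → Disjoint A B) →
      S.sup id = X →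
      ∃ (I : Finset (EuclideanSpace ℝ (Fin d)))
        (φ : EuclideanSpace ℝ (Fin d) → EuclideanSpace ℝ (Fin d)),
        I ⊆ X ∧ I.Nonempty ∧ (∀ x ∈ X, φ x ∈ I) ∧
        (∑ x ∈ X, ‖x - φ x‖ ^ 2) + lam * I.card ≤ 2 * dpMeansCost lam S c := by
  intro S c hne hdisj hcover
  obtain ⟨P, rfl⟩ : ∃ P : Finpartition X, P.parts = S :=
    ⟨{ parts := S
       supIndep := supIndep_iff_pairwiseDisjoint.mpr hdisj
       sup_parts := hcover
       bot_notMem := fun h => not_nonempty_empty (hne ∅ h) }, rfl⟩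
  obtain ⟨F, hFmem, hF⟩ := P.exists_mem_parts_sum_norm_sub_sq_le_two_mul c
  refine ⟨P.parts.image F, fun x => F (P.part x),
    image_subset_iff.2 fun A hA => P.subset hA (hFmem A hA),
    (P.parts_nonempty hX.ne_empty).image F, fun x hx => mem_image_of_mem F (P.part_mem.2 hx), ?_⟩
  have hcard : lam * #(P.parts.image F) ≤ lam * #P.parts :=
    mul_le_mul_of_nonneg_left (by exact_mod_cast card_image_le) hlam.le
  unfold dpMeansCost
  beta_reduce
  linarith [mul_nonneg hlam.le (Nat.cast_nonneg #P.parts)]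
end

section
/- Let S be a finite nonempty subset of ℝ^d (more precisely, a finite multiset or finite indexed family of points) and let μ = (1/|S|) Σ_{x∈S} x be its centroid. Then there exists a point p ∈ S such that Σ_{x∈S} ‖x − p‖² ≤ 2 · Σ_{x∈S} ‖x − μ‖². -/
/-!
By the parallel axis theorem, moving the center from the centroid `μ` to a point `c` adds exactly
`n ‖μ - c‖²` to the sum of squared distances. Taking for `c` the data point closest to `μ`,
this extra term is at most `∑ ‖x - μ‖²`, since the minimum is at most the mean.
-/

open Finset

section

variable {E : Type*} [NormedAddCommGroup E] [InnerProductSpace ℝ E] {ι : Type*} [Fintype ι]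

theorem sum_sub_centroid_eq_zero [Nonempty ι] (p : ι → E) :
    ∑ i, (p i - (Fintype.card ι : ℝ)⁻¹ • ∑ k, p k) = 0 := by
  have hn : (Fintype.card ι : ℝ) ≠ 0 := Nat.cast_ne_zero.mpr Fintype.card_ne_zero
  rw [sum_sub_distrib, sum_const, card_univ, ← Nat.cast_smul_eq_nsmul ℝ, smul_smul,
    mul_inv_cancel₀ hn, one_smul, sub_self]

theorem sum_norm_sub_sq_eq_of_sum_sub_eq_zero (p : ι → E) {m : E}
    (hm : ∑ i, (p i - m) = 0) (c : E) :
    ∑ i, ‖p i - c‖ ^ 2 = ∑ i, ‖p i - m‖ ^ 2 + Fintype.card ι * ‖m - c‖ ^ 2 := by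
  have expand (i : ι) : ‖p i - c‖ ^ 2 =
      ‖p i - m‖ ^ 2 + 2 * inner ℝ (p i - m) (m - c) + ‖m - c‖ ^ 2 := by
    rw [← norm_add_sq_real, sub_add_sub_cancel]
  have cross : ∑ i, 2 * inner ℝ (p i - m) (m - c) = 0 := by
    rw [← mul_sum, ← sum_inner, hm, inner_zero_left, mul_zero]
  simp only [expand, sum_add_distrib, cross, add_zero, sum_const, card_univ, nsmul_eq_mul]

theorem exists_card_mul_le_sum [Nonempty ι] (f : ι → ℝ) :
    ∃ j, Fintype.card ι * f j ≤ ∑ i, f i := by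
  obtain ⟨j, -, hj⟩ := exists_min_image univ f univ_nonempty
  refine ⟨j, ?_⟩
  calc Fintype.card ι * f j = ∑ _i : ι, f j := by simp
    _ ≤ ∑ i, f i := sum_le_sum fun i _ => hj i (mem_univ i)

end

/-- For a finite nonempty family of points with centroid `μ`,
some point of the family is a center whose within-sum of squared distances is
at most twice that of `μ`. -/
theorem exists_point_center_two_approx {d : ℕ} {ι : Type*} [Fintype ι]
    [Nonempty ι] (p : ι → EuclideanSpace ℝ (Fin d)) :
    ∃ j : ι,
      ∑ i : ι, ‖p i - p j‖ ^ 2 ≤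
        2 * ∑ i : ι, ‖p i - ((Fintype.card ι : ℝ)⁻¹ • ∑ k : ι, p k)‖ ^ 2 := by
  set μ := (Fintype.card ι : ℝ)⁻¹ • ∑ k : ι, p k
  obtain ⟨j, hj⟩ := exists_card_mul_le_sum fun i => ‖p i - μ‖ ^ 2
  refine ⟨j, ?_⟩
  rw [sum_norm_sub_sq_eq_of_sum_sub_eq_zero p (sum_sub_centroid_eq_zero p), norm_sub_rev]
  linarith
end
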